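/- For every integer t ≥ 1, the weighted sum satisfies the upper bound ∑_{i=1}^t α_t^i/√i ≤ 2/√t. -/
import Mathlib


/-- The learning rate `α_t = (H+1)/(H+t)`. -/
noncomputable def lrate (H t : ℕ) : ℝ := (H + 1) / (H + t)

/-- The weight `α_t^i = α_i · ∏_{j=i+1}^t (1 − α_j)`. -/
noncomputable def lrateW (H t i : ℕ) : ℝ :=
  lrate H i * ∏ j ∈ Finset.Icc (i + 1) t, (1 - lrate H j)

lemma lrateW_succ (H t i : ℕ) (hi : i ≤ t) :
    lrateW H (t + 1) i = lrateW H t i * (1 - lrate H (t + 1)) := by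
  unfold lrateW
  rw [Finset.prod_Icc_succ_top (by omega : i + 1 ≤ t + 1)]
  ring

lemma lrateW_self (H t : ℕ) : lrateW H t t = lrate H t := by
  unfold lrateW
  rw [Finset.Icc_eq_empty (by omega), Finset.prod_empty, mul_one]

theorem stmt_4 (H : ℕ) (hH : 1 ≤ H) (t : ℕ) (ht : 1 ≤ t) :
    ∑ i ∈ Finset.Icc 1 t, lrateW H t i / Real.sqrt i ≤ 2 / Real.sqrt t := by
  induction t, ht using Nat.le_induction with
  | base =>
    rw [Finset.Icc_self, Finset.sum_singleton, lrateW_self]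
    unfold lrate
    push_cast
    rw [Real.sqrt_one, div_one, div_self (by positivity : (H : ℝ) + 1 ≠ 0)]
    norm_num
  | succ t ht ih =>
    rw [Finset.sum_Icc_succ_top (by omega : 1 ≤ t + 1), lrateW_self]
    have hrw : ∀ i ∈ Finset.Icc 1 t, lrateW H (t + 1) i / Real.sqrt i
        = (lrateW H t i / Real.sqrt i) * (1 - lrate H (t + 1)) := by
      intro i hi
      rw [lrateW_succ H t i (Finset.mem_Icc.mp hi).2]; ring
    rw [Finset.sum_congr rfl hrw, ← Finset.sum_mul]
    set a := Real.sqrt t with ha_def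
    have hb' : ((t + 1 : ℕ) : ℝ) = (t : ℝ) + 1 := by push_cast; ring
    rw [hb']
    set b := Real.sqrt ((t : ℝ) + 1) with hb_def
    have ht1 : (1 : ℝ) ≤ (t : ℝ) := by exact_mod_cast ht
    have ha : 0 < a := Real.sqrt_pos.mpr (by linarith)
    have hb : 0 < b := Real.sqrt_pos.mpr (by linarith)
    have ha2 : a ^ 2 = (t : ℝ) := Real.sq_sqrt (by linarith)
    have hb2 : b ^ 2 = (t : ℝ) + 1 := Real.sq_sqrt (by linarith)
    have hα : lrate H (t + 1) = ((H : ℝ) + 1) / ((H : ℝ) + (t : ℝ) + 1) := by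
      unfold lrate; push_cast; ring_nf
    have hc : (0 : ℝ) < (H : ℝ) + (t : ℝ) + 1 := by positivity
    have hα1 : 0 ≤ 1 - lrate H (t + 1) := by
      rw [hα]
      have : ((H : ℝ) + 1) / ((H : ℝ) + (t : ℝ) + 1) ≤ 1 := by
        rw [div_le_one hc]; linarith
      linarith
    have h1 : (∑ i ∈ Finset.Icc 1 t, lrateW H t i / Real.sqrt i) * (1 - lrate H (t + 1))
        ≤ 2 / a * (1 - lrate H (t + 1)) :=
      mul_le_mul_of_nonneg_right ih hα1
    have key : 2 * a * b ≤ 2 * (t : ℝ) + 1 := by nlinarith [sq_nonneg (a - b)]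
    have h2 : 2 / a * (1 - lrate H (t + 1)) + lrate H (t + 1) / b ≤ 2 / b := by
      rw [hα]
      have expand : 2 / a * (1 - ((H : ℝ) + 1) / ((H : ℝ) + (t : ℝ) + 1))
            + ((H : ℝ) + 1) / ((H : ℝ) + (t : ℝ) + 1) / b
          = (2 * b * ((H : ℝ) + (t : ℝ) + 1) - 2 * b * ((H : ℝ) + 1) + a * ((H : ℝ) + 1))
            / (a * b * ((H : ℝ) + (t : ℝ) + 1)) := by
        field_simp
      rw [expand, div_le_div_iff₀ (by positivity) hb]
      have hHr : (0 : ℝ) ≤ (H : ℝ) := Nat.cast_nonneg H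
      nlinarith [mul_le_mul_of_nonneg_left key ha.le, mul_pos ha hb, mul_pos hb hb,
        mul_le_mul_of_nonneg_right (mul_le_mul_of_nonneg_left key ha.le) hb.le]
    linarith
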